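/- (Main Lemma.) Let $f_0, B, T, c > 0$ with $f_0 > B/2$, and let $\phi(t, t_d) = -2\pi\big(\tfrac{B}{T} t\, t_d + f_0 t_d - \tfrac{B}{2T} t_d^2\big)$ be the demodulated FMCW phase. Suppose $t \geq 0$, $t_d \geq 0$, $t_e > 0$, $t_d + t_e \leq T/2$, and the phase error $\phi_e = \phi(t, t_d) - \phi(t, t_d + t_e)$ satisfies $0 < \phi_e \leq \arcsin(A_2/A_1)$, where $0 < A_2 < A_1$ are the amplitudes of the residual indirect paths and the direct path respectively. Then the distance error $d_e = c\, t_e$ is strictly less than $\dfrac{\arcsin(A_2/A_1)\, c}{2\pi(f_0 - B/2)}$. -/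
import Mathlib


/-- Main Lemma: For `f₀, B, T, c > 0` with `f₀ > B/2`, amplitudes
`0 < A₂ < A₁`, `t ≥ 0`, `t_d ≥ 0`, `t_e > 0`, `t_d + t_e ≤ T/2`, if the phase error
`φ_e = φ (t, t_d) - φ (t, t_d + t_e)` (with
`φ (t, t_d) = -2π ((B/T) t t_d + f₀ t_d - (B/(2T)) t_d²)`) satisfies
`0 < φ_e ≤ arcsin (A₂ / A₁)`, then the distance error `c t_e` is strictly less than
`arcsin (A₂ / A₁) c / (2π (f₀ - B/2))`. -/
theorem fmcw_distance_error_bound (f0 B T c A1 A2 t td te φe : ℝ)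
    (hf0 : 0 < f0) (hB : 0 < B) (hT : 0 < T) (hc : 0 < c)
    (hfB : B / 2 < f0)
    (hA2 : 0 < A2) (hA : A2 < A1)
    (ht : 0 ≤ t) (htd : 0 ≤ td) (hte : 0 < te) (hsum : td + te ≤ T / 2)
    (hφe : φe =
      (-(2 * Real.pi) * (B / T * t * td + f0 * td - B / (2 * T) * td ^ 2)) -
      (-(2 * Real.pi) * (B / T * t * (td + te) + f0 * (td + te)
          - B / (2 * T) * (td + te) ^ 2)))
    (hφe_pos : 0 < φe) (hφe_le : φe ≤ Real.arcsin (A2 / A1)) :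
    c * te < Real.arcsin (A2 / A1) * c / (2 * Real.pi * (f0 - B / 2)) := by
  have hπ := Real.pi_pos
  have hK : 0 < 2 * Real.pi * (f0 - B / 2) := by nlinarith
  have hexp : φe = 2 * Real.pi * (B / T * t * te + f0 * te
      - B / (2 * T) * (2 * td * te + te ^ 2)) := by
    rw [hφe]; ring
  have h1 : 0 ≤ B / T * t * te := by positivity
  have h2 : B / (2 * T) * (2 * td * te + te ^ 2) < B / 2 * te := by
    have h3 : 2 * td * te + te ^ 2 < T * te := by nlinarith
    have h4 : B / (2 * T) * (2 * td * te + te ^ 2) < B / (2 * T) * (T * te) := by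
      apply mul_lt_mul_of_pos_left h3; positivity
    have h5 : B / (2 * T) * (T * te) = B / 2 * te := by field_simp
    linarith
  have key : 2 * Real.pi * (f0 - B / 2) * te < φe := by
    rw [hexp]; nlinarith
  have hte' : te < Real.arcsin (A2 / A1) / (2 * Real.pi * (f0 - B / 2)) := by
    rw [lt_div_iff₀ hK]; nlinarith
  calc c * te < c * (Real.arcsin (A2 / A1) / (2 * Real.pi * (f0 - B / 2))) :=
        mul_lt_mul_of_pos_left hte' hc
    _ = Real.arcsin (A2 / A1) * c / (2 * Real.pi * (f0 - B / 2)) := by ring
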